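/- If for some k ≥ 1 one has Qᵏ = Q^{k−1} ≠ ∅, then inf Q^{k−1} ∈ P; in particular, if P = ∅, then the sequence (Qᵏ) is strictly decreasing as long as its terms are nonempty, i.e., Qᵏ ≠ ∅ implies Q^{k+1} ⊊ Qᵏ. -/

import Mathlib

open Classical in
/-- The decreasing sequence of sets `Qᵏ`: `Q⁰ = [0,1]` and
`Q^{k+1} = {q ∈ Qᵏ : (1−δ)·u*(q) + δ·Uᵏ(q) ≥ m(q)}`, where `Uᵏ` is the chord of `m`
from `(inf Qᵏ, m(inf Qᵏ))` to `(1, m(1))` (constant `m(1)` if `inf Qᵏ = 1`). -/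
noncomputable def Qseq (m ustar : ℝ → ℝ) (δ : ℝ) : ℕ → Set ℝ
  | 0 => Set.Icc 0 1
  | k + 1 =>
      if Qseq m ustar δ k = ∅ then (∅ : Set ℝ)
      else
        {q ∈ Qseq m ustar δ k |
          (1 - δ) * ustar q +
            δ * (if sInf (Qseq m ustar δ k) < 1 then
                ((1 - q) * m (sInf (Qseq m ustar δ k))
                  + (q - sInf (Qseq m ustar δ k)) * m 1) / (1 - sInf (Qseq m ustar δ k))
              else m 1)
          ≥ m q}

/-!
Since `m` and `u*` are continuous, every `Qᵏ` is closed, so `b = inf Qᵏ` lies in `Qᵏ`. The chord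
`Uᵏ` passes through `(b, m b)`, hence if `Q^{k+1} = Qᵏ` then `b ∈ Q^{k+1}` says
`m b ≤ (1 - δ) u*(b) + δ m b`, i.e. `m b ≤ u*(b)` because `δ < 1`; together with `u* ≤ m` this puts
`b` in `P`.
-/

theorem continuous_of_affine_combination {E : Type*} [AddCommGroup E] [Module ℝ E]
    [TopologicalSpace E] [ContinuousAdd E] [ContinuousSMul ℝ E] {f : ℝ → E}
    (hf : ∀ x y t : ℝ, f ((1 - t) * x + t * y) = (1 - t) • f x + t • f y) :
    Continuous f := by
  have hform : f = fun t => (1 - t) • f 0 + t • f 1 := by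
    funext t
    simpa using hf 0 1 t
  rw [hform]
  fun_prop

open Classical in
/-- The chord `Uᵏ` of the definition of `Qseq`, with `b = inf Qᵏ`. -/
noncomputable def chordToOne (m : ℝ → ℝ) (b q : ℝ) : ℝ :=
  if b < 1 then ((1 - q) * m b + (q - b) * m 1) / (1 - b) else m 1

theorem continuous_chordToOne (m : ℝ → ℝ) (b : ℝ) : Continuous (chordToOne m b) := by
  unfold chordToOne
  split_ifs <;> fun_prop

theorem chordToOne_self (m : ℝ → ℝ) {b : ℝ} (hb : b ≤ 1) : chordToOne m b b = m b := by
  unfold chordToOne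
  split_ifs with h
  · field_simp [sub_ne_zero.mpr h.ne']
    ring
  · rw [le_antisymm hb (not_lt.mp h)]

section Qseq

variable (m ustar : ℝ → ℝ) (δ : ℝ)

theorem Qseq_succ_of_nonempty {k : ℕ} (hne : (Qseq m ustar δ k).Nonempty) :
    Qseq m ustar δ (k + 1) = {q ∈ Qseq m ustar δ k |
      m q ≤ (1 - δ) * ustar q + δ * chordToOne m (sInf (Qseq m ustar δ k)) q} := by
  rw [Qseq, if_neg hne.ne_empty]
  rfl

theorem Qseq_succ_subset (k : ℕ) : Qseq m ustar δ (k + 1) ⊆ Qseq m ustar δ k := by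
  rcases (Qseq m ustar δ k).eq_empty_or_nonempty with hempty | hne
  · rw [Qseq, if_pos hempty, hempty]
  · rw [Qseq_succ_of_nonempty m ustar δ hne]
    exact Set.sep_subset _ _

theorem Qseq_subset_Icc (k : ℕ) : Qseq m ustar δ k ⊆ Set.Icc 0 1 := by
  induction k with
  | zero => exact subset_rfl
  | succ k ih => exact (Qseq_succ_subset m ustar δ k).trans ih

variable {m ustar}

theorem isClosed_Qseq (hcont : ContinuousOn m (Set.Icc 0 1)) (hu : Continuous ustar) (k : ℕ) :
    IsClosed (Qseq m ustar δ k) := by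
  induction k with
  | zero => exact isClosed_Icc
  | succ k ih =>
    rcases (Qseq m ustar δ k).eq_empty_or_nonempty with hempty | hne
    · rw [Qseq, if_pos hempty]
      exact isClosed_empty
    · rw [Qseq_succ_of_nonempty m ustar δ hne]
      have hchord := continuous_chordToOne m (sInf (Qseq m ustar δ k))
      exact ih.isClosed_le (hcont.mono (Qseq_subset_Icc m ustar δ k))
        (by fun_prop : Continuous fun q => (1 - δ) * ustar q + δ * chordToOne m _ q).continuousOn

theorem sInf_Qseq_mem (hcont : ContinuousOn m (Set.Icc 0 1)) (hu : Continuous ustar) {k : ℕ}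
    (hne : (Qseq m ustar δ k).Nonempty) : sInf (Qseq m ustar δ k) ∈ Qseq m ustar δ k :=
  (isClosed_Qseq δ hcont hu k).csInf_mem hne
    ⟨0, fun _ hq => (Qseq_subset_Icc m ustar δ k hq).1⟩

theorem sInf_Qseq_mem_of_succ_eq (hδ : δ < 1) (hcont : ContinuousOn m (Set.Icc 0 1))
    (hu : Continuous ustar) (hle : ∀ p ∈ Set.Icc (0 : ℝ) 1, ustar p ≤ m p) (k : ℕ)
    (hstat : Qseq m ustar δ (k + 1) = Qseq m ustar δ k) (hne : (Qseq m ustar δ k).Nonempty) :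
    sInf (Qseq m ustar δ k) ∈ {p ∈ Set.Icc (0 : ℝ) 1 | m p = ustar p} := by
  have hmem := sInf_Qseq_mem δ hcont hu hne
  have hI := Qseq_subset_Icc m ustar δ k hmem
  have hmem_succ : sInf (Qseq m ustar δ k) ∈ Qseq m ustar δ (k + 1) := by rwa [hstat]
  rw [Qseq_succ_of_nonempty m ustar δ hne] at hmem_succ
  have hineq := hmem_succ.2
  rw [chordToOne_self m hI.2] at hineq
  have hmu : m (sInf (Qseq m ustar δ k)) ≤ ustar (sInf (Qseq m ustar δ k)) := by nlinarith
  exact ⟨hI, le_antisymm hmu (hle _ hI)⟩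

end Qseq

theorem Qseq_stationary_implies_inf_in_P_general
    (m ustar : ℝ → ℝ) (δ : ℝ) (hδ : δ ∈ Set.Ioo (0 : ℝ) 1)
    (hcont : ContinuousOn m (Set.Icc (0 : ℝ) 1))
    (haff : ∀ x y t : ℝ, ustar ((1 - t) * x + t * y) = (1 - t) * ustar x + t * ustar y)
    (hle : ∀ p ∈ Set.Icc (0 : ℝ) 1, ustar p ≤ m p) :
    (∀ k : ℕ, Qseq m ustar δ (k + 1) = Qseq m ustar δ k →
      (Qseq m ustar δ k).Nonempty →
      sInf (Qseq m ustar δ k) ∈ {p ∈ Set.Icc (0 : ℝ) 1 | m p = ustar p}) ∧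
    ({p ∈ Set.Icc (0 : ℝ) 1 | m p = ustar p} = ∅ →
      ∀ k : ℕ, (Qseq m ustar δ k).Nonempty →
        Qseq m ustar δ (k + 1) ⊂ Qseq m ustar δ k) := by
  have stationary :=
    sInf_Qseq_mem_of_succ_eq δ hδ.2 hcont (continuous_of_affine_combination haff) hle
  refine ⟨stationary, fun hP k hne => ?_⟩
  exact (Qseq_succ_subset m ustar δ k).ssubset_of_ne fun hstat => hP.subset (stationary k hstat hne)

/-- if `Q^(k+1) = Qᵏ ≠ ∅` for some `k`, then `inf Qᵏ ∈ P`; in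
particular, if `P = ∅` the sequence is strictly decreasing while nonempty. -/
theorem Qseq_stationary_implies_inf_in_P
    (m ustar : ℝ → ℝ) (δ : ℝ) (hδ : δ ∈ Set.Ioo (0 : ℝ) 1)
    (hconv : ConvexOn ℝ (Set.Icc (0 : ℝ) 1) m)
    (hcont : ContinuousOn m (Set.Icc (0 : ℝ) 1))
    (haff : ∀ x y t : ℝ, ustar ((1 - t) * x + t * y) = (1 - t) * ustar x + t * ustar y)
    (hle : ∀ p ∈ Set.Icc (0 : ℝ) 1, ustar p ≤ m p) :
    (∀ k : ℕ, Qseq m ustar δ (k + 1) = Qseq m ustar δ k →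
      (Qseq m ustar δ k).Nonempty →
      sInf (Qseq m ustar δ k) ∈ {p ∈ Set.Icc (0 : ℝ) 1 | m p = ustar p}) ∧
    ({p ∈ Set.Icc (0 : ℝ) 1 | m p = ustar p} = ∅ →
      ∀ k : ℕ, (Qseq m ustar δ k).Nonempty →
        Qseq m ustar δ (k + 1) ⊂ Qseq m ustar δ k) :=
  Qseq_stationary_implies_inf_in_P_general m ustar δ hδ hcont haff hle
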